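/- arXiv:1605.05601 — 2 statements merged into one kernel-verified Lean document; each statement's English description precedes it below -/
import Mathlib

section
/- Let s(n) denote the number of strings of length n over the three-letter alphabet {E, L, R} in which no two consecutive letters both belong to {L, R} (i.e., formally, the cardinality of the set of functions f : Fin n → Fin 3, where letter 0 represents E, such that there is no index i with both f(i) ≠ 0 and f(i+1) ≠ 0). Then s satisfies the recursion s(n+2) = s(n+1) + 2·s(n) for all natural numbers n. -/
/-! The count works over any finite alphabet `α` whose letter `0` plays the role of `E`. Split
admissible strings of length `n + 2` by their first letter: a string starting with `0` is `0`
followed by an arbitrary admissible string of length `n + 1`; a string starting with one of the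
other `|α| - 1` letters must continue with `0`, followed by an arbitrary admissible string of
length `n`. -/

def J : ℕ → ℕ
  | 0 => 0
  | 1 => 1
  | n + 2 => J (n + 1) + 2 * J n

def s (n : ℕ) : ℕ :=
  Fintype.card {f : Fin n → Fin 3 //
    ∀ i : Fin n, ∀ h : (i : ℕ) + 1 < n,
      ¬(f i ≠ 0 ∧ f ⟨(i : ℕ) + 1, h⟩ ≠ 0)}

namespace Fintype

theorem card_subtype_of_cons_iff {β : Type*} {n : ℕ} {R : (Fin (n + 1) → β) → Prop}
    {P : β → Prop} {Q : (Fin n → β) → Prop} [Fintype {f // R f}] [Fintype {x // P x}]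
    [Fintype {g // Q g}] (h : ∀ x g, R (Fin.cons x g) ↔ P x ∧ Q g) :
    card {f // R f} = card {x // P x} * card {g // Q g} := by
  rw [← card_prod]
  refine card_congr ((Equiv.subtypeEquiv (Fin.consEquiv fun _ ↦ β).symm fun f ↦ ?_).trans
    Equiv.subtypeProdEquivProd)
  simpa using h (f 0) (Fin.tail f)

theorem card_subtype_eq_card_and_add_card_and_not {β : Type*} (p q : β → Prop)
    [Fintype {x // p x}] [Fintype {x // p x ∧ q x}] [Fintype {x // p x ∧ ¬q x}] :
    card {x // p x} = card {x // p x ∧ q x} + card {x // p x ∧ ¬q x} := by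
  classical
  rw [← card_sum]
  exact card_congr ((Equiv.subtypeEquivRight fun x ↦ by tauto).trans
    (subtypeOrEquiv _ _ fun _ hq hnq x hx ↦ (hnq x hx).2 (hq x hx).2))

end Fintype

open Fintype

section Admissible

variable {α : Type*} [Zero α]

def Admissible {n : ℕ} (f : Fin n → α) : Prop :=
  ∀ i : Fin n, ∀ h : (i : ℕ) + 1 < n, ¬(f i ≠ 0 ∧ f ⟨i + 1, h⟩ ≠ 0)

instance [DecidableEq α] {n : ℕ} : DecidablePred (Admissible : (Fin n → α) → Prop) :=
  fun f ↦ by unfold Admissible; infer_instance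

theorem admissible_cons_iff {n : ℕ} (x : α) (g : Fin n → α) :
    Admissible (Fin.cons x g : Fin (n + 1) → α) ↔
      (∀ h : 0 < n, x = 0 ∨ g ⟨0, h⟩ = 0) ∧ Admissible g := by
  have cons_mk_succ (k : ℕ) (h : k + 1 < n + 1) :
      (Fin.cons x g : Fin (n + 1) → α) ⟨k + 1, h⟩ = g ⟨k, by omega⟩ :=
    Fin.cons_succ (α := fun _ ↦ α) x g ⟨k, by omega⟩
  simp only [Admissible, Fin.forall_fin_succ, Fin.val_zero, Fin.val_succ, cons_mk_succ,
    Fin.cons_zero, Fin.cons_succ, Nat.add_lt_add_iff_right, not_and_or, not_not]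

variable [Fintype α] [DecidableEq α]

theorem card_admissible_and_head_eq_zero (n : ℕ) :
    card {f : Fin (n + 1) → α // Admissible f ∧ f 0 = 0} =
      card {g : Fin n → α // Admissible g} := by
  rw [card_subtype_of_cons_iff (P := (· = 0)) (Q := Admissible), card_unique, one_mul]
  intro x g
  rw [admissible_cons_iff, Fin.cons_zero]
  aesop

theorem card_admissible_and_head_ne_zero (n : ℕ) :
    card {f : Fin (n + 2) → α // Admissible f ∧ f 0 ≠ 0} =
      (card α - 1) * card {g : Fin n → α // Admissible g} := by
  rw [card_subtype_of_cons_iff (P := (· ≠ 0)) (Q := fun g ↦ Admissible g ∧ g 0 = 0),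
    card_admissible_and_head_eq_zero, card_subtype_compl, card_subtype_eq]
  intro x g
  rw [admissible_cons_iff, Fin.cons_zero]
  aesop

theorem card_admissible_add_two (n : ℕ) :
    card {f : Fin (n + 2) → α // Admissible f} =
      card {f : Fin (n + 1) → α // Admissible f} +
        (card α - 1) * card {f : Fin n → α // Admissible f} := by
  rw [card_subtype_eq_card_and_add_card_and_not _ (· 0 = 0), card_admissible_and_head_eq_zero,
    card_admissible_and_head_ne_zero]

end Admissible

theorem s_eq_card_admissible (n : ℕ) : s n = card {f : Fin n → Fin 3 // Admissible f} := rfl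

theorem s_recursion (n : ℕ) : s (n + 2) = s (n + 1) + 2 * s n := by
  simpa [← s_eq_card_admissible] using card_admissible_add_two (α := Fin 3) n
end

section
/- For every natural number n, the product of two successive Jacobsthal numbers J(n)·J(n+1) is a triangular number; that is, there exists a natural number m such that 2·(J(n)·J(n+1)) = m·(m+1). -/
theorem J_succ_eq_two_mul_add_neg_one_pow (n : ℕ) :
    (J (n + 1) : ℤ) = 2 * J n + (-1) ^ n := by
  induction n with
  | zero => simp [J]
  | succ n ih =>
    have hJ : (J (n + 2) : ℤ) = J (n + 1) + 2 * J n := by simp [J]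
    rw [hJ, pow_succ]
    linear_combination -ih

theorem J_succ_of_even {n : ℕ} (hn : Even n) : J (n + 1) = 2 * J n + 1 := by
  have h := J_succ_eq_two_mul_add_neg_one_pow n
  rw [hn.neg_one_pow] at h
  exact_mod_cast h

theorem J_succ_add_one_of_odd {n : ℕ} (hn : Odd n) : J (n + 1) + 1 = 2 * J n := by
  have h := J_succ_eq_two_mul_add_neg_one_pow n
  rw [hn.neg_one_pow] at h
  omega

theorem jacobsthal_product_triangular (n : ℕ) :
    ∃ m : ℕ, 2 * (J n * J (n + 1)) = m * (m + 1) := by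
  rcases Nat.even_or_odd n with hn | hn
  · exact ⟨2 * J n, by rw [J_succ_of_even hn, mul_assoc]⟩
  · exact ⟨J (n + 1), by rw [← mul_assoc, ← J_succ_add_one_of_odd hn, mul_comm]⟩
end
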